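/- For all k ∈ {2,3} and l ∈ {0,1}, the following identity holds in H: z^k·t·s·t·s·t^l = c·z^k·s·t·s·t^l + a·d·z^k·s·t^l + b·c·d·z^k·t^{l−1} + a·b·d²·z^k·t⁻¹·s⁻¹·t^{l−1} + b²·d²·z^{k−1}·u·s·t²·u·t^l. -/

import Mathlib

/-!
The braid relations give `z = (stu)³ = u·s·t²·u·s·t·s·t`, hence `z·t⁻¹s⁻¹t⁻¹s⁻¹ = u·s·t²·u`.
The quadratic relations make `s` and `t` invertible with `s = a + b·s⁻¹` and `t = c + d·t⁻¹`;
substituting these into `t·s·t·s` three times gives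
`tsts = c·sts + ad·s + bcd·t⁻¹ + abd²·t⁻¹s⁻¹t⁻¹ + b²d²·t⁻¹s⁻¹t⁻¹s⁻¹`.
Multiplying by `z^k` on the left and `t^l = t·t^{l-1}` on the right gives the identity.
-/

noncomputable section

open scoped TensorProduct

section QuadraticRelation

variable {R A : Type*} [CommRing R] [Ring A] [Algebra R A] {a b b' c d : R} {x s s' t t' : A}

theorem inv_mul_of_mul_self_eq (hb : b * b' = 1) (hx : x * x = a • x + b • 1) :
    (b' • x - (a * b') • 1) * x = 1 := by
  rw [sub_mul, smul_mul_assoc, smul_mul_assoc, hx, one_mul, smul_add, smul_smul, smul_smul,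
    mul_comm b' b, hb, one_smul, mul_comm b' a, add_sub_cancel_left]

theorem mul_inv_of_mul_self_eq (hb : b * b' = 1) (hx : x * x = a • x + b • 1) :
    x * (b' • x - (a * b') • 1) = 1 := by
  rw [mul_sub, mul_smul_comm, mul_smul_comm, hx, mul_one, smul_add, smul_smul, smul_smul,
    mul_comm b' b, hb, one_smul, mul_comm b' a, add_sub_cancel_left]

theorem eq_add_smul_inv_of_mul_self_eq (hb : b * b' = 1) :
    x = a • 1 + b • (b' • x - (a * b') • 1) := by
  rw [smul_sub, smul_smul, smul_smul, hb, one_smul, ← mul_assoc, mul_comm b a, mul_assoc, hb,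
    mul_one, add_sub_cancel]

theorem mul_mul_mul_mul_eq_of_eq_add_smul (hs : s = a • 1 + b • s') (ht : t = c • 1 + d • t')
    (hs' : s' * s = 1) (ht' : t' * t = 1) :
    t * s * t * s = c • (s * t * s) + (a * d) • s + (b * c * d) • t' +
      (a * b * d ^ 2) • (t' * s' * t') + (b ^ 2 * d ^ 2) • (t' * s' * t' * s') := by
  have h1 :
      t' * s' * t * s = c • t' + (a * d) • (t' * s' * t') + (b * d) • (t' * s' * t' * s') := by
    rw [ht]
    simp only [mul_add, add_mul, smul_mul_assoc, mul_smul_comm, mul_one, mul_assoc, hs']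
    rw [hs]
    simp only [mul_add, mul_smul_comm, mul_one]
    module
  have h2 : t' * s * t * s = a • s + b • (t' * s' * t * s) := by
    nth_rw 1 [hs]
    simp only [mul_add, add_mul, smul_mul_assoc, mul_smul_comm, mul_one, mul_assoc]
    rw [← mul_assoc t' t, ht', one_mul]
  nth_rw 1 [ht]
  simp only [add_mul, smul_mul_assoc, one_mul]
  rw [h2, h1]
  module

end QuadraticRelation

theorem pow_three_eq_of_braid {M : Type*} [Monoid M] {s t u : M}
    (h₁ : t * u * s * t = u * s * t * u) (h₂ : s * t * u * s * t = u * s * t * u * s) :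
    (s * t * u) ^ 3 = u * s * t * t * u * s * t * s * t := by
  have hsu : s * (u * s * t * u) = u * s * t * u * s := by
    rw [← h₂, ← h₁]; simp only [mul_assoc]
  calc (s * t * u) ^ 3 = s * (t * u * s * t) * (u * s * t * u) := by
        simp only [pow_succ, pow_zero, one_mul, mul_assoc]
    _ = s * (u * s * t * u) * (u * s * t * u) := by rw [h₁]
    _ = u * s * t * u * (s * (u * s * t * u)) := by
        conv_lhs => rw [hsu]
        simp only [mul_assoc]
    _ = u * s * t * u * (s * t * u * s * t) := by rw [hsu, h₂]
    _ = u * s * t * (t * u * s * t) * s * t := by rw [h₁]; simp only [mul_assoc]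
    _ = u * s * t * t * u * s * t * s * t := by simp only [mul_assoc]

/-- The Laurent polynomial ring `ℤ[a, b, b⁻¹, c, d, d⁻¹]`, realised as the monoid algebra of
`ℕ × ℕ × ℤ × ℤ` over `ℤ`; the four coordinates record the exponents of `a`, `c`, `b`, `d`
respectively (`b` and `d` are invertible, so their exponents range over all of `ℤ`). -/
abbrev Rr : Type := AddMonoidAlgebra ℤ (ℕ × ℕ × ℤ × ℤ)


namespace G13

/-- The indeterminate `a`. -/
def pa : Rr := AddMonoidAlgebra.single (1, 0, 0, 0) 1
/-- The indeterminate `c`. -/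
def pc : Rr := AddMonoidAlgebra.single (0, 1, 0, 0) 1
/-- The invertible indeterminate `b`. -/
def pb : Rr := AddMonoidAlgebra.single (0, 0, 1, 0) 1
/-- The invertible indeterminate `d`. -/
def pd : Rr := AddMonoidAlgebra.single (0, 0, 0, 1) 1
/-- `b⁻¹`. -/
def pbInv : Rr := AddMonoidAlgebra.single (0, 0, -1, 0) 1
/-- `d⁻¹`. -/
def pdInv : Rr := AddMonoidAlgebra.single (0, 0, 0, -1) 1

def fS : FreeAlgebra Rr (Fin 3) := FreeAlgebra.ι Rr 0
def fT : FreeAlgebra Rr (Fin 3) := FreeAlgebra.ι Rr 1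
def fU : FreeAlgebra Rr (Fin 3) := FreeAlgebra.ι Rr 2

/-- The defining relations of the generic Hecke algebra of `G₁₃`:
`tust = ustu`, `stust = ustus`, `s² = a·s + b`, `t² = c·t + d`, `u² = c·u + d`. -/
inductive Rel : FreeAlgebra Rr (Fin 3) → FreeAlgebra Rr (Fin 3) → Prop
  | braid1 : Rel (fT * fU * fS * fT) (fU * fS * fT * fU)
  | braid2 : Rel (fS * fT * fU * fS * fT) (fU * fS * fT * fU * fS)
  | relS : Rel (fS * fS)
      (algebraMap Rr (FreeAlgebra Rr (Fin 3)) pa * fS + algebraMap Rr (FreeAlgebra Rr (Fin 3)) pb)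
  | relT : Rel (fT * fT)
      (algebraMap Rr (FreeAlgebra Rr (Fin 3)) pc * fT + algebraMap Rr (FreeAlgebra Rr (Fin 3)) pd)
  | relU : Rel (fU * fU)
      (algebraMap Rr (FreeAlgebra Rr (Fin 3)) pc * fU + algebraMap Rr (FreeAlgebra Rr (Fin 3)) pd)

/-- The generic Hecke algebra of `G₁₃`. -/
abbrev H := RingQuot Rel

/-- The generator `s` of `H`. -/
def s : H := RingQuot.mkAlgHom Rr Rel fS
/-- The generator `t` of `H`. -/
def t : H := RingQuot.mkAlgHom Rr Rel fT
/-- The generator `u` of `H`. -/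
def u : H := RingQuot.mkAlgHom Rr Rel fU

/-- The central element `z = (stu)³`. -/
def z : H := (s * t * u) ^ 3

/-- Scalars of `Rr` viewed inside `H`. -/
def sc : Rr → H := algebraMap Rr H

/-- The twelve elements `E₁, …, E₁₂`: `1, u, s, ts, su, us, tu, tsu, tus, sts, stu, uts`. -/
def E : Fin 12 → H :=
  ![1, u, s, t * s, s * u, u * s, t * u, t * s * u, t * u * s, s * t * s, s * t * u, u * t * s]

/-- The family `B₁₃ = (b₁, …, b₉₆)`, indexed here by `Fin 96` (so `B i = b_{i+1}`):
`b_{24k+12l+m} = z^k · E_m · t^l` for `k ∈ {0,…,3}`, `l ∈ {0,1}`, `m ∈ {1,…,12}`. -/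
def B : Fin 96 → H := fun i =>
  z ^ (i.val / 24) * E ⟨i.val % 12, by omega⟩ * t ^ (i.val / 12 % 2)

/-- The inverse of the generator `s`: `s⁻¹ = b⁻¹·s − a·b⁻¹·1`. -/
def sInv : H := sc pbInv * s - sc (pa * pbInv)
/-- The inverse of the generator `t`: `t⁻¹ = d⁻¹·t − c·d⁻¹·1`. -/
def tInv : H := sc pdInv * t - sc (pc * pdInv)
/-- The inverse of the generator `u`: `u⁻¹ = d⁻¹·u − c·d⁻¹·1`. -/
def uInv : H := sc pdInv * u - sc (pc * pdInv)

/-- Integer powers of `t`: `tP n = tⁿ` for `n ≥ 0`, and `tP n = (t⁻¹)^(−n)` for `n < 0`. -/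
def tP : ℤ → H := fun n => if 0 ≤ n then t ^ n.toNat else tInv ^ (-n).toNat

theorem pb_mul_pbInv : pb * pbInv = 1 := by
  simp only [pb, pbInv, AddMonoidAlgebra.single_mul_single, AddMonoidAlgebra.one_def, mul_one]
  rfl

theorem pd_mul_pdInv : pd * pdInv = 1 := by
  simp only [pd, pdInv, AddMonoidAlgebra.single_mul_single, AddMonoidAlgebra.one_def, mul_one]
  rfl

theorem sc_mul (r : Rr) (x : H) : sc r * x = r • x := (Algebra.smul_def r x).symm

theorem s_mul_s : s * s = pa • s + pb • 1 := by
  simpa [s, Algebra.algebraMap_eq_smul_one] using RingQuot.mkAlgHom_rel Rr Rel.relS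

theorem t_mul_t : t * t = pc • t + pd • 1 := by
  simpa [t, Algebra.algebraMap_eq_smul_one] using RingQuot.mkAlgHom_rel Rr Rel.relT

theorem tust_eq_ustu : t * u * s * t = u * s * t * u := by
  simpa [s, t, u] using RingQuot.mkAlgHom_rel Rr Rel.braid1

theorem stust_eq_ustus : s * t * u * s * t = u * s * t * u * s := by
  simpa [s, t, u] using RingQuot.mkAlgHom_rel Rr Rel.braid2

theorem sInv_eq : sInv = pbInv • s - (pa * pbInv) • 1 := by
  rw [sInv, sc_mul, sc, Algebra.algebraMap_eq_smul_one]

theorem tInv_eq : tInv = pdInv • t - (pc * pdInv) • 1 := by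
  rw [tInv, sc_mul, sc, Algebra.algebraMap_eq_smul_one]

theorem sInv_mul_s : sInv * s = 1 := by
  rw [sInv_eq]; exact inv_mul_of_mul_self_eq (x := s) pb_mul_pbInv s_mul_s

theorem s_mul_sInv : s * sInv = 1 := by
  rw [sInv_eq]; exact mul_inv_of_mul_self_eq (x := s) pb_mul_pbInv s_mul_s

theorem tInv_mul_t : tInv * t = 1 := by
  rw [tInv_eq]; exact inv_mul_of_mul_self_eq (x := t) pd_mul_pdInv t_mul_t

theorem t_mul_tInv : t * tInv = 1 := by
  rw [tInv_eq]; exact mul_inv_of_mul_self_eq (x := t) pd_mul_pdInv t_mul_t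

theorem s_eq : s = pa • 1 + pb • sInv := by
  rw [sInv_eq]; exact eq_add_smul_inv_of_mul_self_eq (x := s) (a := pa) pb_mul_pbInv

theorem t_eq : t = pc • 1 + pd • tInv := by
  rw [tInv_eq]; exact eq_add_smul_inv_of_mul_self_eq (x := t) (a := pc) pd_mul_pdInv

theorem z_eq : z = u * s * t * t * u * s * t * s * t :=
  pow_three_eq_of_braid tust_eq_ustu stust_eq_ustus

theorem z_mul_tInv_sInv_tInv_sInv : z * (tInv * sInv * tInv * sInv) = u * s * t * t * u := by
  have hs (y : H) : s * (sInv * y) = y := by rw [← mul_assoc, s_mul_sInv, one_mul]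
  have ht (y : H) : t * (tInv * y) = y := by rw [← mul_assoc, t_mul_tInv, one_mul]
  simp only [z_eq, mul_assoc, ht, hs, s_mul_sInv, mul_one]

theorem tP_sub_one (l : ℤ) : tP (l - 1) = tInv * tP l := by
  unfold tP
  split_ifs with hl₁ hl₀ hl₀
  · rw [show l.toNat = (l - 1).toNat + 1 by omega, pow_succ', ← mul_assoc, tInv_mul_t, one_mul]
  · omega
  · rw [show (-(l - 1)).toNat = 1 by omega, show l.toNat = 0 by omega, pow_one, pow_zero, mul_one]
  · rw [show (-(l - 1)).toNat = (-l).toNat + 1 by omega, pow_succ']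

theorem z_mul_tsts (x w : H) :
    x * z * t * s * t * s * w = pc • (x * z * s * t * s * w) + (pa * pd) • (x * z * s * w) +
      (pb * pc * pd) • (x * z * tInv * w) + (pa * pb * pd ^ 2) • (x * z * tInv * sInv * tInv * w) +
      (pb ^ 2 * pd ^ 2) • (x * u * s * t ^ 2 * u * w) := by
  rw [sq t, show x * z * t * s * t * s * w = x * z * (t * s * t * s) * w by simp only [mul_assoc],
    mul_mul_mul_mul_eq_of_eq_add_smul (s := s) (t := t) s_eq t_eq sInv_mul_s tInv_mul_t]
  simp only [mul_add, add_mul, mul_smul_comm, smul_mul_assoc]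
  rw [mul_assoc x z (tInv * sInv * tInv * sInv), z_mul_tInv_sInv_tInv_sInv]
  simp only [mul_assoc]

/-- **special case 8.** For `k ∈ {2,3}`, `l ∈ {0,1}`:
`z^k·tsts·t^l = c·z^k·sts·t^l + ad·z^k·s·t^l + bcd·z^k·t^{l−1}
 + abd²·z^k·t⁻¹s⁻¹·t^{l−1} + b²d²·z^{k−1}·ust²u·t^l`. -/
theorem stmt11 : ∀ k ∈ ({2, 3} : Set ℕ), ∀ l ∈ ({0, 1} : Set ℤ),
    z ^ k * t * s * t * s * tP l =
      sc pc * (z ^ k * s * t * s * tP l) + sc (pa * pd) * (z ^ k * s * tP l) +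
        sc (pb * pc * pd) * (z ^ k * tP (l - 1)) +
        sc (pa * pb * pd ^ 2) * (z ^ k * tInv * sInv * tP (l - 1)) +
        sc (pb ^ 2 * pd ^ 2) * (z ^ (k - 1) * u * s * t ^ 2 * u * tP l) := by
  intro k hk l _
  obtain ⟨j, rfl⟩ : ∃ j, k = j + 1 := ⟨k - 1, by rcases hk with rfl | rfl <;> rfl⟩
  rw [pow_succ, Nat.add_sub_cancel, tP_sub_one]
  simpa only [sc_mul, mul_assoc] using z_mul_tsts (z ^ j) (tP l)

end G13
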